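/- Let σ, n > 0 be constants with n > √σ, and let m ≥ 1 be an integer. Define f : (0,∞) → ℝ by f(k) = J_m(k·n/√σ)·J_m'(k) − √σ·n·J_m'(k·n/√σ)·J_m(k), where J_m' denotes the derivative of J_m. Suppose 0 < a < b satisfy J_m(a) = J_m(b) = 0, J_m(r) ≠ 0 for all r ∈ (a,b), and J_m(r) > 0 for all r ∈ (0, √σ·b/n]. Then f has at least one root in the open interval (√σ·a/n, √σ·b/n). -/

import Mathlib

/-!
Positive zeros of `J_m` are simple: by Bessel's equation `x² J'' + x J' + (x² - m²) J = 0`,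
which is regular on `(0, ∞)`, a double zero would force `J_m` to vanish identically there.
So at the consecutive zeros `a < b` the derivatives `J_m'(a)`, `J_m'(b)` have opposite signs.
At `k = √σ a / n` the first term of `f` vanishes, leaving `f(k) = -√σ n J_m'(a) J_m(k)`, and
likewise at `√σ b / n` with `b`; as `J_m(k) > 0` at both points, `f` changes sign on the interval
and the intermediate value theorem gives the root.
-/

open Set

noncomputable section

/-- The Bessel function of the first kind of order `ν`:
`J_ν(x) = Σ_{s=0}^∞ ((−1)^s / (s!·Γ(ν+s+1)))·(x/2)^{2s+ν}`. -/
def besselJ (ν : ℝ) (x : ℝ) : ℝ :=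
  ∑' s : ℕ, ((-1 : ℝ) ^ s / ((s.factorial : ℝ) * Real.Gamma (ν + (s : ℝ) + 1)))
    * (x / 2) ^ (2 * (s : ℝ) + ν)

open scoped Nat

theorem hasDerivAt_tsum_mul_pow {c : ℕ → ℝ} {e : ℕ → ℕ} {x : ℝ}
    (hc : Summable fun s => c s * x ^ e s)
    (hc' : ∀ R, Summable fun s => ‖c s * e s * R ^ (e s - 1)‖) :
    HasDerivAt (fun y => ∑' s, c s * y ^ e s) (∑' s, c s * e s * x ^ (e s - 1)) x := by
  have hx : x ∈ Metric.ball (0 : ℝ) (|x| + 1) := by simp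
  refine hasDerivAt_tsum_of_isPreconnected (g := fun s y => c s * y ^ e s)
    (g' := fun s y => c s * e s * y ^ (e s - 1)) (hc' (|x| + 1)) Metric.isOpen_ball
    (convex_ball _ _).isPreconnected (fun s y _ => ?_) (fun s y hy => ?_) hx hc hx
  · simpa only [mul_assoc] using (hasDerivAt_pow (e s) y).const_mul (c s)
  · have hyR : |y| ≤ |x| + 1 := by simpa using (mem_ball_zero_iff.mp hy).le
    simp only [norm_mul, norm_pow, Real.norm_eq_abs, abs_of_pos (by positivity : 0 < |x| + 1)]
    gcongr

theorem eqOn_zero_of_linear_ode {y y' y'' p q : ℝ → ℝ} {lo hi z K : ℝ}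
    (hy : ∀ t ∈ Icc lo hi, HasDerivAt y (y' t) t)
    (hy' : ∀ t ∈ Icc lo hi, HasDerivAt y' (y'' t) t)
    (hode : ∀ t ∈ Ioo lo hi, y'' t = p t * y' t + q t * y t)
    (hp : ∀ t ∈ Ioo lo hi, |p t| ≤ K) (hq : ∀ t ∈ Ioo lo hi, |q t| ≤ K)
    (hz : z ∈ Ioo lo hi) (hyz : y z = 0) (hy'z : y' z = 0) :
    EqOn y 0 (Icc lo hi) := by
  set v : ℝ → ℝ × ℝ → ℝ × ℝ := fun t u => (u.2, p t * u.2 + q t * u.1)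
  have hK : 0 ≤ K := (abs_nonneg _).trans (hp z hz)
  have hlip : ∀ t ∈ Ioo lo hi, LipschitzOnWith (2 * K + 1).toNNReal (v t) univ := by
    intro t ht
    refine (LipschitzWith.of_dist_le_mul fun u w => ?_).lipschitzOnWith
    rw [Real.coe_toNNReal _ (by linarith)]
    have h1 : dist u.1 w.1 ≤ dist u w := by rw [Prod.dist_eq]; exact le_max_left _ _
    have h2 : dist u.2 w.2 ≤ dist u w := by rw [Prod.dist_eq]; exact le_max_right _ _
    rw [Prod.dist_eq (x := v t u)]
    refine max_le (by nlinarith [dist_nonneg (x := u) (y := w)]) ?_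
    calc dist (p t * u.2 + q t * u.1) (p t * w.2 + q t * w.1)
        = |p t * (u.2 - w.2) + q t * (u.1 - w.1)| := by rw [Real.dist_eq]; ring_nf
      _ ≤ |p t| * dist u.2 w.2 + |q t| * dist u.1 w.1 := by
          rw [Real.dist_eq, Real.dist_eq, ← abs_mul, ← abs_mul]; exact abs_add_le _ _
      _ ≤ K * dist u w + K * dist u w := by
          gcongr
          exacts [hp t ht, hq t ht]
      _ ≤ (2 * K + 1) * dist u w := by nlinarith [dist_nonneg (x := u) (y := w)]
  have hsol : ∀ t ∈ Ioo lo hi, HasDerivAt (fun t => (y t, y' t)) (v t (y t, y' t)) t := by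
    intro t ht
    simpa only [v, hode t ht] using
      (hy t (Ioo_subset_Icc_self ht)).prodMk (hy' t (Ioo_subset_Icc_self ht))
  have hcont : ContinuousOn (fun t => (y t, y' t)) (Icc lo hi) := fun t ht =>
    ((hy t ht).continuousAt.prodMk (hy' t ht).continuousAt).continuousWithinAt
  have hzero := ODE_solution_unique_of_mem_Icc (g := fun _ => 0) hlip hz hcont hsol
    (fun _ _ => mem_univ _) continuousOn_const
    (fun t _ => by simpa [v, Prod.zero_eq_mk] using hasDerivAt_const t (0 : ℝ × ℝ))
    (fun _ _ => mem_univ _) (by simp [hyz, hy'z])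
  exact fun t ht => congrArg Prod.fst (hzero ht)

theorem HasDerivAt.nonneg_of_eq_zero_of_nonneg_right {f : ℝ → ℝ} {d x y : ℝ}
    (hd : HasDerivAt f d x) (hxy : x < y) (hfx : f x = 0) (hf : ∀ t ∈ Ioo x y, 0 ≤ f t) :
    0 ≤ d := by
  refine ge_of_tendsto ((hasDerivAt_iff_tendsto_slope.mp hd).mono_left
    (nhdsGT_le_nhdsNE x)) ?_
  filter_upwards [Ioo_mem_nhdsGT hxy] with t ht
  rw [slope_def_field, hfx, sub_zero]
  exact div_nonneg (hf t ht) (sub_pos.mpr ht.1).le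

theorem HasDerivAt.nonpos_of_eq_zero_of_nonneg_left {f : ℝ → ℝ} {d w x : ℝ}
    (hd : HasDerivAt f d x) (hwx : w < x) (hfx : f x = 0) (hf : ∀ t ∈ Ioo w x, 0 ≤ f t) :
    d ≤ 0 := by
  refine le_of_tendsto ((hasDerivAt_iff_tendsto_slope.mp hd).mono_left
    (nhdsLT_le_nhdsNE x)) ?_
  filter_upwards [Ioo_mem_nhdsLT hwx] with t ht
  rw [slope_def_field, hfx, sub_zero]
  exact div_nonpos_of_nonneg_of_nonpos (hf t ht) (sub_neg.mpr ht.2).le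

theorem IsPreconnected.pos_or_neg_of_ne_zero {s : Set ℝ} {f : ℝ → ℝ} (hs : IsPreconnected s)
    (hf : ContinuousOn f s) (hne : ∀ x ∈ s, f x ≠ 0) :
    (∀ x ∈ s, 0 < f x) ∨ ∀ x ∈ s, f x < 0 := by
  by_contra! ⟨⟨x, hx, hfx⟩, ⟨y, hy, hfy⟩⟩
  obtain ⟨t, ht, hft⟩ := hs.intermediate_value₂ hx hy hf continuousOn_const hfx hfy
  exact hne t ht hft

theorem mul_nonpos_of_hasDerivAt_of_ne_zero {f : ℝ → ℝ} {a b da db : ℝ} (hab : a < b)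
    (hf : ContinuousOn f (Ioo a b)) (ha : HasDerivAt f da a) (hb : HasDerivAt f db b)
    (hfa : f a = 0) (hfb : f b = 0) (hne : ∀ t ∈ Ioo a b, f t ≠ 0) : da * db ≤ 0 := by
  rcases isPreconnected_Ioo.pos_or_neg_of_ne_zero hf hne with hpos | hneg
  · exact mul_nonpos_of_nonneg_of_nonpos
      (ha.nonneg_of_eq_zero_of_nonneg_right hab hfa fun t ht => (hpos t ht).le)
      (hb.nonpos_of_eq_zero_of_nonneg_left hab hfb fun t ht => (hpos t ht).le)
  · have hneg' : ∀ t ∈ Ioo a b, 0 ≤ -f t := fun t ht => (neg_pos.mpr (hneg t ht)).le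
    have := mul_nonpos_of_nonneg_of_nonpos
      (ha.neg.nonneg_of_eq_zero_of_nonneg_right hab (by simp [hfa]) hneg')
      (hb.neg.nonpos_of_eq_zero_of_nonneg_left hab (by simp [hfb]) hneg')
    rwa [neg_mul_neg] at this

theorem exists_mem_Ioo_eq_zero_of_mul_neg {f : ℝ → ℝ} {a b : ℝ} (hab : a ≤ b)
    (hf : ContinuousOn f (Icc a b)) (h : f a * f b < 0) : ∃ x ∈ Ioo a b, f x = 0 := by
  rcases mul_neg_iff.mp h with ⟨ha, hb⟩ | ⟨ha, hb⟩
  · exact intermediate_value_Ioo' hab hf ⟨hb, ha⟩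
  · exact intermediate_value_Ioo hab hf ⟨ha, hb⟩

def besselCoeff (m s : ℕ) : ℝ := (-1) ^ s / (s ! * (m + s)! * 2 ^ (2 * s + m))

theorem abs_besselCoeff_le (m s : ℕ) : |besselCoeff m s| ≤ (s ! : ℝ)⁻¹ := by
  rw [besselCoeff, abs_div, abs_pow, abs_neg, abs_one, one_pow, one_div,
    abs_of_pos (by positivity)]
  gcongr
  calc (s ! : ℝ) = s ! * 1 * 1 := by ring
    _ ≤ s ! * (m + s)! * 2 ^ (2 * s + m) := by
        gcongr
        · exact_mod_cast (m + s).factorial_pos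
        · exact one_le_pow₀ one_le_two

theorem natCast_sq_le_four_pow (k : ℕ) : (k : ℝ) ^ 2 ≤ 4 ^ k := by
  have : (k : ℝ) ≤ 2 ^ k := by exact_mod_cast k.lt_two_pow_self.le
  calc (k : ℝ) ^ 2 ≤ (2 ^ k) ^ 2 := by gcongr
    _ = 4 ^ k := by rw [← pow_mul, mul_comm, pow_mul]; norm_num

theorem summable_besselCoeff_mul_pow (m i : ℕ) {d : ℕ → ℝ}
    (hd : ∀ s, |d s| ≤ (2 * s + m + 1 : ℝ) ^ 2) (R : ℝ) :
    Summable fun s => ‖besselCoeff m s * d s * R ^ (2 * s + m - i)‖ := by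
  set M := max 1 |R|
  have hM : 1 ≤ M := le_max_left _ _
  refine .of_nonneg_of_le (fun _ => norm_nonneg _) (fun s => ?_)
    ((Real.summable_pow_div_factorial ((4 * M) ^ 2)).mul_left (4 * (4 * M) ^ m))
  have hk : (2 * s + m + 1 : ℝ) ^ 2 ≤ 4 ^ (2 * s + m + 1) := by
    exact_mod_cast natCast_sq_le_four_pow (2 * s + m + 1)
  have hR : |R| ^ (2 * s + m - i) ≤ M ^ (2 * s + m) :=
    (pow_le_pow_left₀ (abs_nonneg R) (le_max_right _ _) _).trans
      (pow_le_pow_right₀ hM (Nat.sub_le _ _))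
  calc ‖besselCoeff m s * d s * R ^ (2 * s + m - i)‖
      = |besselCoeff m s| * |d s| * |R| ^ (2 * s + m - i) := by
        simp only [norm_mul, norm_pow, Real.norm_eq_abs]
    _ ≤ (s ! : ℝ)⁻¹ * 4 ^ (2 * s + m + 1) * M ^ (2 * s + m) := by
        gcongr
        · exact abs_besselCoeff_le m s
        · exact (hd s).trans hk
    _ = 4 * (4 * M) ^ m * (((4 * M) ^ 2) ^ s / s !) := by
        rw [← pow_mul, mul_pow, mul_pow]; ring

theorem besselJ_natCast_eq (m : ℕ) :
    besselJ m = fun x => ∑' s, besselCoeff m s * x ^ (2 * s + m) := by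
  ext x
  refine tsum_congr fun s => ?_
  have hΓ : Real.Gamma (m + s + 1) = (m + s)! := by
    exact_mod_cast Real.Gamma_nat_eq_factorial (m + s)
  have hexp : (2 * s + m : ℝ) = ((2 * s + m : ℕ) : ℝ) := by push_cast; ring
  rw [hΓ, hexp, Real.rpow_natCast, div_pow, besselCoeff]
  field_simp

-- The truncated subtractions in the exponents only matter where the factor in front vanishes.
def besselJDeriv (m : ℕ) (x : ℝ) : ℝ :=
  ∑' s, besselCoeff m s * (2 * s + m : ℕ) * x ^ (2 * s + m - 1)

def besselJDeriv2 (m : ℕ) (x : ℝ) : ℝ :=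
  ∑' s, besselCoeff m s * (2 * s + m : ℕ) * (2 * s + m - 1 : ℕ) * x ^ (2 * s + m - 1 - 1)

theorem summable_besselJ (m : ℕ) (x : ℝ) :
    Summable fun s => besselCoeff m s * x ^ (2 * s + m) := by
  have hd (s : ℕ) : |(1 : ℕ → ℝ) s| ≤ (2 * s + m + 1 : ℝ) ^ 2 := by
    rw [Pi.one_apply, abs_one]
    exact one_le_pow₀ (le_add_of_nonneg_left (by positivity))
  simpa using (summable_besselCoeff_mul_pow m 0 hd x).of_norm

theorem summable_norm_besselJDeriv (m : ℕ) (x : ℝ) :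
    Summable fun s => ‖besselCoeff m s * (2 * s + m : ℕ) * x ^ (2 * s + m - 1)‖ := by
  refine summable_besselCoeff_mul_pow m 1 (fun s => ?_) x
  push_cast
  rw [abs_of_nonneg (by positivity)]
  nlinarith

theorem summable_norm_besselJDeriv2 (m : ℕ) (x : ℝ) :
    Summable fun s => ‖besselCoeff m s * (2 * s + m : ℕ) * (2 * s + m - 1 : ℕ) *
      x ^ (2 * s + m - 1 - 1)‖ := by
  have hd (s : ℕ) :
      |((2 * s + m : ℕ) : ℝ) * (2 * s + m - 1 : ℕ)| ≤ (2 * s + m + 1 : ℝ) ^ 2 := by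
    have : ((2 * s + m - 1 : ℕ) : ℝ) ≤ (2 * s + m : ℕ) := by exact_mod_cast Nat.sub_le _ _
    rw [abs_of_nonneg (by positivity)]
    push_cast at this ⊢
    nlinarith
  simpa only [mul_assoc, Nat.sub_sub] using summable_besselCoeff_mul_pow m 2 hd x

theorem hasDerivAt_besselJ (m : ℕ) (x : ℝ) : HasDerivAt (besselJ m) (besselJDeriv m x) x := by
  rw [besselJ_natCast_eq]
  exact hasDerivAt_tsum_mul_pow (summable_besselJ m x) (summable_norm_besselJDeriv m)

theorem hasDerivAt_besselJDeriv (m : ℕ) (x : ℝ) :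
    HasDerivAt (besselJDeriv m) (besselJDeriv2 m x) x :=
  hasDerivAt_tsum_mul_pow (c := fun s => besselCoeff m s * (2 * s + m : ℕ))
    (e := fun s => 2 * s + m - 1) (summable_norm_besselJDeriv m x).of_norm
    (summable_norm_besselJDeriv2 m)

@[fun_prop]
theorem continuous_besselJ (m : ℕ) : Continuous (besselJ m) :=
  continuous_iff_continuousAt.mpr fun x => (hasDerivAt_besselJ m x).continuousAt

@[fun_prop]
theorem continuous_besselJDeriv (m : ℕ) : Continuous (besselJDeriv m) :=
  continuous_iff_continuousAt.mpr fun x => (hasDerivAt_besselJDeriv m x).continuousAt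

theorem besselCoeff_succ_mul (m s : ℕ) :
    besselCoeff m (s + 1) * (4 * (s + 1) * (s + 1 + m)) = -besselCoeff m s := by
  rw [besselCoeff, besselCoeff, ← add_assoc, Nat.factorial_succ, Nat.factorial_succ,
    show 2 * (s + 1) + m = 2 * s + m + 2 by ring, pow_add]
  push_cast
  field_simp
  ring

theorem natCast_mul_pow_pred_mul (k : ℕ) (x : ℝ) : (k : ℝ) * x ^ (k - 1) * x = k * x ^ k := by
  rcases k with _ | k
  · simp
  · rw [Nat.add_sub_cancel, pow_succ]; ring

theorem natCast_mul_natCast_pred (k : ℕ) : (k : ℝ) * ((k - 1 : ℕ) : ℝ) = k * (k - 1) := by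
  rcases k with _ | k <;> simp

/-- Termwise, with `k = 2s + m`, the left side is `c_s (k² - m²) x^k + c_s x^(k+2)`, which by
`besselCoeff_succ_mul` equals `T s - T (s + 1)` for `T s = 4 s (s + m) c_s x^k`; the series
telescopes. -/
theorem besselJ_ode (m : ℕ) (x : ℝ) :
    x ^ 2 * besselJDeriv2 m x + x * besselJDeriv m x + (x ^ 2 - m ^ 2) * besselJ m x = 0 := by
  set T : ℕ → ℝ := fun s => besselCoeff m s * (4 * s * (s + m)) * x ^ (2 * s + m)
  have hT : Summable T := by
    refine (summable_besselCoeff_mul_pow m 0 (fun s => ?_) x).of_norm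
    rw [abs_of_nonneg (by positivity)]
    nlinarith
  have htelescope : HasSum (fun s => T s - T (s + 1)) 0 := by
    simpa [T] using hT.hasSum.sub ((hasSum_nat_add_iff' 1).mpr hT.hasSum)
  have hterm (s : ℕ) : x ^ 2 * (besselCoeff m s * (2 * s + m : ℕ) * (2 * s + m - 1 : ℕ) *
      x ^ (2 * s + m - 1 - 1)) + x * (besselCoeff m s * (2 * s + m : ℕ) * x ^ (2 * s + m - 1)) +
      (x ^ 2 - m ^ 2) * (besselCoeff m s * x ^ (2 * s + m)) = T s - T (s + 1) := by
    have H1 := natCast_mul_pow_pred_mul (2 * s + m) x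
    have H2 := natCast_mul_pow_pred_mul (2 * s + m - 1) x
    have H3 := natCast_mul_natCast_pred (2 * s + m)
    have H4 := besselCoeff_succ_mul m s
    simp only [T]
    push_cast at H1 H2 H3 H4 ⊢
    linear_combination (besselCoeff m s * (2 * s + m) * x) * H2 +
      (besselCoeff m s * (((2 * s + m - 1 : ℕ) : ℝ) + 1)) * H1 +
      (besselCoeff m s * x ^ (2 * s + m)) * H3 + x ^ (2 * s + m + 2) * H4
  have hsum := (((summable_norm_besselJDeriv2 m x).of_norm.hasSum.mul_left (x ^ 2)).add
    ((summable_norm_besselJDeriv m x).of_norm.hasSum.mul_left x)).add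
    ((summable_besselJ m x).hasSum.mul_left (x ^ 2 - m ^ 2))
  rw [besselJ_natCast_eq, besselJDeriv, besselJDeriv2]
  exact (funext hterm ▸ hsum).unique htelescope

theorem besselJDeriv_ne_zero {m : ℕ} {z t : ℝ} (hz : 0 < z) (hJz : besselJ m z = 0)
    (ht : 0 < t) (hJt : besselJ m t ≠ 0) : besselJDeriv m z ≠ 0 := by
  intro hJ'z
  obtain ⟨lo, hlo, hloz, hlot⟩ : ∃ lo, 0 < lo ∧ lo < z ∧ lo < t :=
    ⟨min z t / 2, by positivity, by linarith [min_le_left z t], by linarith [min_le_right z t]⟩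
  have hode (r : ℝ) (hr : r ∈ Ioo lo (z + t)) : besselJDeriv2 m r =
      -r⁻¹ * besselJDeriv m r + (m ^ 2 / r ^ 2 - 1) * besselJ m r := by
    have hr0 : r ≠ 0 := (hlo.trans hr.1).ne'
    field_simp
    linear_combination besselJ_ode m r
  have hinv (r : ℝ) (hr : r ∈ Ioo lo (z + t)) : r⁻¹ ≤ lo⁻¹ := by gcongr; exact hr.1.le
  have hsq (r : ℝ) (hr : r ∈ Ioo lo (z + t)) : m ^ 2 / r ^ 2 ≤ m ^ 2 / lo ^ 2 := by
    gcongr; exact hr.1.le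
  have hzero := eqOn_zero_of_linear_ode (K := lo⁻¹ + m ^ 2 / lo ^ 2 + 1)
    (fun r _ => hasDerivAt_besselJ m r) (fun r _ => hasDerivAt_besselJDeriv m r) hode
    (fun r hr => by
      rw [abs_neg, abs_of_pos (inv_pos.mpr (hlo.trans hr.1))]
      linarith [hinv r hr, (by positivity : (0 : ℝ) ≤ m ^ 2 / lo ^ 2)])
    (fun r hr => by
      rw [abs_le]
      constructor <;> linarith [hsq r hr, (by positivity : (0 : ℝ) ≤ m ^ 2 / r ^ 2),
        (by positivity : (0 : ℝ) ≤ lo⁻¹)])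
    (z := z) ⟨hloz, by linarith⟩ hJz hJ'z
  exact hJt (hzero ⟨hlot.le, by linarith⟩)

theorem characteristic_root_2d_constant_general
    (σ n : ℝ) (hσ : 0 < σ) (hn : 0 < n)
    (m : ℕ)
    (a b : ℝ) (ha : 0 < a) (hab : a < b)
    (hJa : besselJ m a = 0) (hJb : besselJ m b = 0)
    (hJab : ∀ r ∈ Ioo a b, besselJ m r ≠ 0)
    (hpos : ∀ r ∈ Ioc 0 (Real.sqrt σ * b / n), 0 < besselJ m r) :
    ∃ k ∈ Ioo (Real.sqrt σ * a / n) (Real.sqrt σ * b / n),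
      besselJ m (k * n / Real.sqrt σ) * deriv (besselJ m) k
        - Real.sqrt σ * n * deriv (besselJ m) (k * n / Real.sqrt σ) * besselJ m k = 0 := by
  set s := Real.sqrt σ
  have hs : 0 < s := Real.sqrt_pos.mpr hσ
  have hmid : (a + b) / 2 ∈ Ioo a b := ⟨by linarith, by linarith⟩
  have hJ'a := besselJDeriv_ne_zero ha hJa (by linarith) (hJab _ hmid)
  have hJ'b := besselJDeriv_ne_zero (ha.trans hab) hJb (by linarith) (hJab _ hmid)
  have hJ'ab : besselJDeriv m a * besselJDeriv m b < 0 :=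
    (mul_nonpos_of_hasDerivAt_of_ne_zero hab (continuous_besselJ m).continuousOn
      (hasDerivAt_besselJ m a) (hasDerivAt_besselJ m b) hJa hJb hJab).lt_of_ne
      (mul_ne_zero hJ'a hJ'b)
  set f : ℝ → ℝ := fun k => besselJ m (k * n / s) * besselJDeriv m k
    - s * n * besselJDeriv m (k * n / s) * besselJ m k
  have hf : Continuous f := by unfold f; fun_prop
  have hA : 0 < s * a / n := by positivity
  have hAB : s * a / n < s * b / n := by gcongr
  have hfA : f (s * a / n) = -(s * n * besselJDeriv m a * besselJ m (s * a / n)) := by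
    simp only [f, show s * a / n * n / s = a by field_simp, hJa]; ring
  have hfB : f (s * b / n) = -(s * n * besselJDeriv m b * besselJ m (s * b / n)) := by
    simp only [f, show s * b / n * n / s = b by field_simp, hJb]; ring
  have hfAB : f (s * a / n) * f (s * b / n) < 0 := by
    have hJA := hpos _ ⟨hA, hAB.le⟩
    have hJB := hpos _ ⟨hA.trans hAB, le_rfl⟩
    rw [hfA, hfB, neg_mul_neg]
    have : 0 < (s * n) ^ 2 * (besselJ m (s * a / n) * besselJ m (s * b / n)) := by positivity
    nlinarith
  obtain ⟨k, hk, hfk⟩ := exists_mem_Ioo_eq_zero_of_mul_neg hAB.le hf.continuousOn hfAB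
  refine ⟨k, hk, ?_⟩
  rwa [show deriv (besselJ m) = besselJDeriv m from funext fun x => (hasDerivAt_besselJ m x).deriv]

/-- Existence of a root of the two-dimensional transmission-eigenvalue characteristic
function `f(k) = J_m(kn/√σ)·J_m'(k) − √σ·n·J_m'(kn/√σ)·J_m(k)` in the interval
`(√σ·a/n, √σ·b/n)`, where `a < b` are consecutive positive zeros of `J_m` and `√σ·b/n`
lies below the first positive zero of `J_m`. -/
theorem characteristic_root_2d_constant
    (σ n : ℝ) (hσ : 0 < σ) (hn : 0 < n) (hns : Real.sqrt σ < n)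
    (m : ℕ) (hm : 1 ≤ m)
    (a b : ℝ) (ha : 0 < a) (hab : a < b)
    (hJa : besselJ m a = 0) (hJb : besselJ m b = 0)
    (hJab : ∀ r ∈ Ioo a b, besselJ m r ≠ 0)
    (hpos : ∀ r ∈ Ioc 0 (Real.sqrt σ * b / n), 0 < besselJ m r) :
    ∃ k ∈ Ioo (Real.sqrt σ * a / n) (Real.sqrt σ * b / n),
      besselJ m (k * n / Real.sqrt σ) * deriv (besselJ m) k
        - Real.sqrt σ * n * deriv (besselJ m) (k * n / Real.sqrt σ) * besselJ m k = 0 :=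
  characteristic_root_2d_constant_general σ n hσ hn m a b ha hab hJa hJb hJab hpos

end
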